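/- Let (D,F) be a pair with F = (f₁,…,f_s), let X ⊆ V(D), let α be an F-dicolouring of D[X], and let (D',F') be the pair reduced from (D,F) by α. Then for every F'-dicolouring β of D' = D − X, the colouring γ of D defined by γ = α on X and γ = β on V(D)∖X is an F-dicolouring of D. -/

import Mathlib

open scoped Classical

/-- A finite digraph with vertex set a `Finset ℕ` and no loops.
Both arcs `(u,v)` and `(v,u)` may be present (a digon). -/
structure Digraph' where
  verts : Finset ℕ
  arcs : Finset (ℕ × ℕ)
  mem_fst : ∀ a ∈ arcs, a.1 ∈ verts
  mem_snd : ∀ a ∈ arcs, a.2 ∈ verts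
  no_loops : ∀ a ∈ arcs, a.1 ≠ a.2

namespace Digraph'

/-- In-degree of `v`. -/
def inDeg (D : Digraph') (v : ℕ) : ℕ := (D.arcs.filter fun a => a.2 = v).card

/-- Out-degree of `v`. -/
def outDeg (D : Digraph') (v : ℕ) : ℕ := (D.arcs.filter fun a => a.1 = v).card

/-- In-neighbourhood of `v`. -/
def inNbrs (D : Digraph') (v : ℕ) : Finset ℕ := (D.arcs.filter fun a => a.2 = v).image Prod.fst

/-- Out-neighbourhood of `v`. -/
def outNbrs (D : Digraph') (v : ℕ) : Finset ℕ := (D.arcs.filter fun a => a.1 = v).image Prod.snd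

/-- Neighbourhood of `v` in the underlying graph. -/
def ugNbrs (D : Digraph') (v : ℕ) : Finset ℕ := D.inNbrs v ∪ D.outNbrs v

/-- `H` is a subdigraph of `D`. -/
def IsSubdigraph (H D : Digraph') : Prop := H.verts ⊆ D.verts ∧ H.arcs ⊆ D.arcs

/-- The subdigraph of `D` induced by the vertex set `X`. -/
def induce (D : Digraph') (X : Finset ℕ) : Digraph' where
  verts := D.verts ∩ X
  arcs := D.arcs.filter fun a => a.1 ∈ X ∧ a.2 ∈ X
  mem_fst := fun a ha => by
    simp only [Finset.mem_filter] at ha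
    exact Finset.mem_inter.mpr ⟨D.mem_fst a ha.1, ha.2.1⟩
  mem_snd := fun a ha => by
    simp only [Finset.mem_filter] at ha
    exact Finset.mem_inter.mpr ⟨D.mem_snd a ha.1, ha.2.2⟩
  no_loops := fun a ha => by
    simp only [Finset.mem_filter] at ha
    exact D.no_loops a ha.1

/-- `D − X`, the digraph obtained from `D` by deleting the vertices of `X`. -/
def del (D : Digraph') (X : Finset ℕ) : Digraph' := D.induce (D.verts \ X)

/-- Adjacency in the underlying graph of `D`. -/
def ugAdj (D : Digraph') (u v : ℕ) : Prop :=
  u ∈ D.verts ∧ v ∈ D.verts ∧ ((u, v) ∈ D.arcs ∨ (v, u) ∈ D.arcs)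

/-- `D` is connected, i.e. its underlying graph is connected. -/
def Connected (D : Digraph') : Prop :=
  D.verts.Nonempty ∧ ∀ u ∈ D.verts, ∀ v ∈ D.verts, Relation.ReflTransGen D.ugAdj u v

/-- `D` is biconnected: it has at least two vertices, is connected, and stays
connected after the deletion of any vertex. -/
def Biconnected (D : Digraph') : Prop :=
  2 ≤ D.verts.card ∧ D.Connected ∧ ∀ x ∈ D.verts, (D.del {x}).Connected

/-- Every arc of `D` lies in a digon. -/
def Bidirected (D : Digraph') : Prop := ∀ a ∈ D.arcs, (a.2, a.1) ∈ D.arcs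

/-- The underlying graph of `D` is a cycle. -/
def IsCycleUG (D : Digraph') : Prop :=
  D.Connected ∧ ∀ v ∈ D.verts, (D.ugNbrs v).card = 2

/-- `D` is a bidirected odd cycle. -/
def BidirectedOddCycle (D : Digraph') : Prop :=
  D.Bidirected ∧ D.IsCycleUG ∧ Odd D.verts.card

/-- `D` is a bidirected complete graph. -/
def BidirectedComplete (D : Digraph') : Prop :=
  ∀ u ∈ D.verts, ∀ v ∈ D.verts, u ≠ v → (u, v) ∈ D.arcs

/-- `D` is strictly-`f`-bidegenerate: every nonempty subdigraph `H` of `D` contains a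
vertex `v` with `d⁻_H(v) < f⁻(v)` or `d⁺_H(v) < f⁺(v)`. -/
def StrictlyBidegenerate (D : Digraph') (f : ℕ → ℕ × ℕ) : Prop :=
  ∀ H : Digraph', H.IsSubdigraph D → H.verts.Nonempty →
    ∃ v ∈ H.verts, H.inDeg v < (f v).1 ∨ H.outDeg v < (f v).2

/-- `α` is an `F`-dicolouring of `D`: for each colour `i`, the subdigraph induced by the
vertices coloured `i` is strictly-`Fᵢ`-bidegenerate. -/
def IsDicolouring (D : Digraph') (s : ℕ) (F : Fin s → ℕ → ℕ × ℕ) (α : ℕ → Fin s) : Prop :=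
  ∀ i : Fin s, (D.induce (D.verts.filter fun v => α v = i)).StrictlyBidegenerate (F i)

/-- `D` is `F`-dicolourable. -/
def Dicolourable (D : Digraph') (s : ℕ) (F : Fin s → ℕ → ℕ × ℕ) : Prop :=
  ∃ α : ℕ → Fin s, D.IsDicolouring s F α

/-- `(D,F)` is a valid pair: `D` is connected and the colour budget dominates the
in- and out-degrees at every vertex. -/
def ValidPair (D : Digraph') (s : ℕ) (F : Fin s → ℕ → ℕ × ℕ) : Prop :=
  D.Connected ∧ ∀ v ∈ D.verts,
    D.inDeg v ≤ ∑ i, (F i v).1 ∧ D.outDeg v ≤ ∑ i, (F i v).2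

/-- `(D,F)` is tight: both budget inequalities are equalities at every vertex. -/
def Tight (D : Digraph') (s : ℕ) (F : Fin s → ℕ → ℕ × ℕ) : Prop :=
  ∀ v ∈ D.verts, ∑ i, (F i v).1 = D.inDeg v ∧ ∑ i, (F i v).2 = D.outDeg v

/-- Hard pairs, defined inductively: monochromatic, bicycle, complete, and join hard pairs. -/
inductive IsHardPair : (s : ℕ) → Digraph' → (Fin s → ℕ → ℕ × ℕ) → Prop
  | mono {s : ℕ} {D : Digraph'} {F : Fin s → ℕ → ℕ × ℕ} (i : Fin s)
      (hbi : D.Biconnected)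
      (hi : ∀ v ∈ D.verts, F i v = (D.inDeg v, D.outDeg v))
      (hk : ∀ k : Fin s, k ≠ i → ∀ v ∈ D.verts, F k v = (0, 0)) :
      IsHardPair s D F
  | bicycle {s : ℕ} {D : Digraph'} {F : Fin s → ℕ → ℕ × ℕ} (i j : Fin s) (hij : i ≠ j)
      (hD : D.BidirectedOddCycle)
      (hi : ∀ v ∈ D.verts, F i v = (1, 1))
      (hj : ∀ v ∈ D.verts, F j v = (1, 1))
      (hk : ∀ k : Fin s, k ≠ i → k ≠ j → ∀ v ∈ D.verts, F k v = (0, 0)) :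
      IsHardPair s D F
  | complete {s : ℕ} {D : Digraph'} {F : Fin s → ℕ → ℕ × ℕ}
      (hD : D.BidirectedComplete)
      (hconst : ∀ k : Fin s, ∀ u ∈ D.verts, ∀ v ∈ D.verts, F k u = F k v)
      (hsym : ∀ k : Fin s, ∀ v ∈ D.verts, (F k v).1 = (F k v).2)
      (hsum : ∀ v ∈ D.verts, ∑ k, (F k v).2 = D.verts.card - 1) :
      IsHardPair s D F
  | join {s : ℕ} {D : Digraph'} {F : Fin s → ℕ → ℕ × ℕ}
      (D₁ D₂ : Digraph') (F₁ F₂ : Fin s → ℕ → ℕ × ℕ) (x : ℕ)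
      (h₁ : IsHardPair s D₁ F₁) (h₂ : IsHardPair s D₂ F₂)
      (hx : D₁.verts ∩ D₂.verts = {x})
      (hV : D.verts = D₁.verts ∪ D₂.verts)
      (hA : D.arcs = D₁.arcs ∪ D₂.arcs)
      (hF₁ : ∀ k : Fin s, ∀ v ∈ D₁.verts, v ≠ x → F k v = F₁ k v)
      (hF₂ : ∀ k : Fin s, ∀ v ∈ D₂.verts, v ≠ x → F k v = F₂ k v)
      (hFx : ∀ k : Fin s, F k x = ((F₁ k x).1 + (F₂ k x).1, (F₁ k x).2 + (F₂ k x).2)) :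
      IsHardPair s D F

/-- The sequence of functions of the pair reduced from `(D,F)` by a colouring `α` of
`X ⊆ V(D)`: the budget of colour `i` at `u` decreases by the number of in- and out-neighbours
of `u` inside `X` coloured `i` (truncated at `0`). -/
def reduceF (D : Digraph') {s : ℕ} (F : Fin s → ℕ → ℕ × ℕ) (X : Finset ℕ) (α : ℕ → Fin s) :
    Fin s → ℕ → ℕ × ℕ :=
  fun i u =>
    ((F i u).1 - ((D.inNbrs u ∩ X).filter fun w => α w = i).card,
     (F i u).2 - ((D.outNbrs u ∩ X).filter fun w => α w = i).card)

/-- `B` is a block of `D`: a maximal biconnected subdigraph. -/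
def IsBlock (B D : Digraph') : Prop :=
  B.IsSubdigraph D ∧ B.Biconnected ∧
    ∀ B' : Digraph', B'.IsSubdigraph D → B'.Biconnected → B.IsSubdigraph B' → B' = B

/-- `x` is a cut-vertex of `D`: `D − x` is disconnected. -/
def CutVertex (D : Digraph') (x : ℕ) : Prop :=
  x ∈ D.verts ∧ (D.del {x}).verts.Nonempty ∧ ¬ (D.del {x}).Connected

/-- `B` is an end-block of `D` whose unique cut-vertex (of `D`) in `B` is `x`. -/
def IsEndBlockAt (B D : Digraph') (x : ℕ) : Prop :=
  IsBlock B D ∧ x ∈ B.verts ∧ D.CutVertex x ∧ ∀ y ∈ B.verts, D.CutVertex y → y = x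

/-- `B` is a monochromatic hard end-block with cut-vertex `x`, for colour `c`. -/
def MonoHardEndBlock {s : ℕ} (F : Fin s → ℕ → ℕ × ℕ) (B : Digraph') (x : ℕ) (c : Fin s) : Prop :=
  B.inDeg x ≤ (F c x).1 ∧ B.outDeg x ≤ (F c x).2 ∧
    ∀ v ∈ B.verts, v ≠ x →
      F c v = (B.inDeg v, B.outDeg v) ∧ ∀ k : Fin s, k ≠ c → F k v = (0, 0)

/-- `B` is a bicycle hard end-block with cut-vertex `x`. -/
def BicycleHardEndBlock {s : ℕ} (F : Fin s → ℕ → ℕ × ℕ) (B : Digraph') (x : ℕ) : Prop :=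
  B.BidirectedOddCycle ∧
    ∃ i j : Fin s, i ≠ j ∧
      1 ≤ (F i x).1 ∧ 1 ≤ (F i x).2 ∧ 1 ≤ (F j x).1 ∧ 1 ≤ (F j x).2 ∧
      ∀ v ∈ B.verts, v ≠ x →
        F i v = (1, 1) ∧ F j v = (1, 1) ∧ ∀ k : Fin s, k ≠ i → k ≠ j → F k v = (0, 0)

/-- `B` is a complete hard end-block with cut-vertex `x`. -/
def CompleteHardEndBlock {s : ℕ} (F : Fin s → ℕ → ℕ × ℕ) (B : Digraph') (x : ℕ) : Prop :=
  B.BidirectedComplete ∧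
    (∀ k : Fin s, ∀ u ∈ B.verts, u ≠ x → ∀ v ∈ B.verts, v ≠ x → F k u = F k v) ∧
    (∀ k : Fin s, ∀ v ∈ B.verts, v ≠ x → (F k v).1 = (F k v).2) ∧
    (∀ k : Fin s, ∀ u ∈ B.verts, u ≠ x → (F k u).1 ≤ (F k x).1 ∧ (F k u).2 ≤ (F k x).2)

/-- `B` is a hard end-block with cut-vertex `x`. -/
def HardEndBlock {s : ℕ} (F : Fin s → ℕ → ℕ × ℕ) (B : Digraph') (x : ℕ) : Prop :=
  (∃ c : Fin s, MonoHardEndBlock F B x c) ∨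
    BicycleHardEndBlock F B x ∨ CompleteHardEndBlock F B x

/-- `(D',F')` is the contraction of `(D,F)` with respect to the hard end-block `B` with
cut-vertex `x`, where `u` is a vertex of `B` other than `x`. -/
def IsContraction (D : Digraph') {s : ℕ} (F : Fin s → ℕ → ℕ × ℕ) (B : Digraph') (x u : ℕ)
    (D' : Digraph') (F' : Fin s → ℕ → ℕ × ℕ) : Prop :=
  D' = D.del (B.verts \ {x}) ∧
  (∀ k : Fin s, ∀ v ∈ D'.verts, v ≠ x → F' k v = F k v) ∧
  ((∃ c : Fin s, MonoHardEndBlock F B x c ∧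
      F' c x = ((F c x).1 - B.inDeg x, (F c x).2 - B.outDeg x) ∧
      ∀ k : Fin s, k ≠ c → F' k x = F k x) ∨
   ((¬ ∃ c : Fin s, MonoHardEndBlock F B x c) ∧
      ∀ k : Fin s, F' k x = ((F k x).1 - (F k u).1, (F k x).2 - (F k u).2)))

/-- Property (E): all the functions exceed `1` in the relevant coordinate at every vertex
having an in-(resp. out-)neighbour. -/
def PropE (D : Digraph') {s : ℕ} (F : Fin s → ℕ → ℕ × ℕ) : Prop :=
  ∀ x ∈ D.verts, ∀ c : Fin s,
    (0 < D.inDeg x → 1 ≤ (F c x).1) ∧ (0 < D.outDeg x → 1 ≤ (F c x).2)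

/-- `C` is a directed cycle: connected, and every vertex has in- and out-degree one. -/
def IsDirectedCycle (C : Digraph') : Prop :=
  C.Connected ∧ ∀ v ∈ C.verts, C.inDeg v = 1 ∧ C.outDeg v = 1

/-- `D` is acyclic: it contains no directed cycle. -/
def AcyclicD (D : Digraph') : Prop :=
  ¬ ∃ C : Digraph', C.IsSubdigraph D ∧ C.IsDirectedCycle

/-- `α` is a `k`-dicolouring of `D`: every colour class induces an acyclic subdigraph. -/
def IsKDicolouring (D : Digraph') (k : ℕ) (α : ℕ → Fin k) : Prop :=
  ∀ i : Fin k, AcyclicD (D.induce (D.verts.filter fun v => α v = i))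

/-- The dichromatic number of `D`. -/
noncomputable def dichromatic (D : Digraph') : ℕ :=
  sInf {k : ℕ | ∃ α : ℕ → Fin k, D.IsKDicolouring k α}

end Digraph'

open Digraph'

namespace Digraph'

variable {D H : Digraph'} {X Y : Finset ℕ} {u v : ℕ}

theorem mem_induce_arcs {a : ℕ × ℕ} : a ∈ (D.induce Y).arcs ↔ a ∈ D.arcs ∧ a.1 ∈ Y ∧ a.2 ∈ Y :=
  Finset.mem_filter

theorem isSubdigraph_induce_iff :
    H.IsSubdigraph (D.induce Y) ↔ H.verts ⊆ D.verts ∩ Y ∧ H.arcs ⊆ D.arcs := by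
  refine ⟨fun h => ⟨h.1, fun a ha => (mem_induce_arcs.1 (h.2 ha)).1⟩, fun h => ⟨h.1, ?_⟩⟩
  intro a ha
  exact mem_induce_arcs.2
    ⟨h.2 ha, (Finset.mem_inter.1 (h.1 (H.mem_fst a ha))).2,
      (Finset.mem_inter.1 (h.1 (H.mem_snd a ha))).2⟩

theorem mem_inNbrs : u ∈ D.inNbrs v ↔ (u, v) ∈ D.arcs := by
  simp [inNbrs]

theorem mem_outNbrs : u ∈ D.outNbrs v ↔ (v, u) ∈ D.arcs := by
  simp [outNbrs]

theorem inDeg_eq_card_inNbrs : D.inDeg v = (D.inNbrs v).card := by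
  refine (Finset.card_image_of_injOn fun a ha b hb hab => Prod.ext hab ?_).symm
  exact (Finset.mem_filter.1 ha).2.trans (Finset.mem_filter.1 hb).2.symm

theorem outDeg_eq_card_outNbrs : D.outDeg v = (D.outNbrs v).card := by
  refine (Finset.card_image_of_injOn fun a ha b hb hab => Prod.ext ?_ hab).symm
  exact (Finset.mem_filter.1 ha).2.trans (Finset.mem_filter.1 hb).2.symm

theorem mem_del_arcs {a : ℕ × ℕ} : a ∈ (D.del X).arcs ↔ a ∈ D.arcs ∧ a.1 ∉ X ∧ a.2 ∉ X := by
  simp only [del, mem_induce_arcs, Finset.mem_sdiff]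
  exact ⟨fun ⟨ha, h₁, h₂⟩ => ⟨ha, h₁.2, h₂.2⟩,
    fun ⟨ha, h₁, h₂⟩ => ⟨ha, ⟨D.mem_fst a ha, h₁⟩, ⟨D.mem_snd a ha, h₂⟩⟩⟩

theorem inDeg_le_inDeg_del_add (hv : v ∉ X) :
    D.inDeg v ≤ (D.del X).inDeg v + (D.inNbrs v ∩ X).card := by
  rw [inDeg_eq_card_inNbrs, inDeg_eq_card_inNbrs]
  refine (Finset.card_le_card fun w hw => ?_).trans (Finset.card_union_le _ _)
  by_cases hwX : w ∈ X
  · exact Finset.mem_union_right _ (Finset.mem_inter.2 ⟨hw, hwX⟩)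
  · exact Finset.mem_union_left _ (mem_inNbrs.2 (mem_del_arcs.2 ⟨mem_inNbrs.1 hw, hwX, hv⟩))

theorem outDeg_le_outDeg_del_add (hv : v ∉ X) :
    D.outDeg v ≤ (D.del X).outDeg v + (D.outNbrs v ∩ X).card := by
  rw [outDeg_eq_card_outNbrs, outDeg_eq_card_outNbrs]
  refine (Finset.card_le_card fun w hw => ?_).trans (Finset.card_union_le _ _)
  by_cases hwX : w ∈ X
  · exact Finset.mem_union_right _ (Finset.mem_inter.2 ⟨hw, hwX⟩)
  · exact Finset.mem_union_left _ (mem_outNbrs.2 (mem_del_arcs.2 ⟨mem_outNbrs.1 hw, hv, hwX⟩))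

section ColourClass

variable {s : ℕ} {γ α β : ℕ → Fin s} {i : Fin s}

theorem IsSubdigraph.of_colourClass (hH : H.IsSubdigraph (D.induce (D.verts.filter (γ · = i))))
    (hv : v ∈ H.verts) : v ∈ D.verts ∧ γ v = i := by
  have := (isSubdigraph_induce_iff.1 hH).1 hv
  simp only [Finset.mem_inter, Finset.mem_filter] at this
  exact this.2

theorem IsSubdigraph.colourClass_induce (hH : H.IsSubdigraph (D.induce (D.verts.filter (γ · = i))))
    (hγ : ∀ v ∈ X, γ v = α v) (hHX : H.verts ⊆ X) :
    H.IsSubdigraph ((D.induce X).induce ((D.induce X).verts.filter (α · = i))) := by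
  have hHX' : H.IsSubdigraph (D.induce X) := isSubdigraph_induce_iff.2
    ⟨fun v hv => Finset.mem_inter.2 ⟨(hH.of_colourClass hv).1, hHX hv⟩,
      (isSubdigraph_induce_iff.1 hH).2⟩
  refine isSubdigraph_induce_iff.2 ⟨fun v hv => ?_, hHX'.2⟩
  obtain ⟨hvD, hγv⟩ := hH.of_colourClass hv
  have hvX := hHX hv
  simp [induce, hvD, hvX, ← hγ v hvX, hγv]

theorem IsSubdigraph.colourClass_del (hH : H.IsSubdigraph (D.induce (D.verts.filter (γ · = i))))
    (hγ : ∀ v ∉ X, γ v = β v) :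
    (H.del X).IsSubdigraph ((D.del X).induce ((D.del X).verts.filter (β · = i))) := by
  refine isSubdigraph_induce_iff.2 ⟨fun v hv => ?_, fun a ha => ?_⟩
  · simp only [del, induce, Finset.mem_inter, Finset.mem_sdiff] at hv
    obtain ⟨hvD, hγv⟩ := hH.of_colourClass hv.1
    have hvX := hv.2.2
    simp [del, induce, hvD, hvX, ← hγ v hvX, hγv]
  · obtain ⟨haH, h₁, h₂⟩ := mem_del_arcs.1 ha
    exact mem_del_arcs.2 ⟨(isSubdigraph_induce_iff.1 hH).2 haH, h₁, h₂⟩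

theorem IsSubdigraph.inDeg_le_of_colourClass
    (hH : H.IsSubdigraph (D.induce (D.verts.filter (γ · = i))))
    (hγ : ∀ v ∈ X, γ v = α v) (hv : v ∉ X) :
    H.inDeg v ≤ (H.del X).inDeg v + ((D.inNbrs v ∩ X).filter (α · = i)).card := by
  refine (inDeg_le_inDeg_del_add hv).trans (Nat.add_le_add_left (Finset.card_le_card ?_) _)
  intro w hw
  obtain ⟨hwH, hwX⟩ := Finset.mem_inter.1 hw
  have hwv := mem_inNbrs.1 hwH
  refine Finset.mem_filter.2 ⟨Finset.mem_inter.2 ⟨mem_inNbrs.2 ?_, hwX⟩, ?_⟩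
  · exact (isSubdigraph_induce_iff.1 hH).2 hwv
  · exact hγ w hwX ▸ (hH.of_colourClass (H.mem_fst _ hwv)).2

theorem IsSubdigraph.outDeg_le_of_colourClass
    (hH : H.IsSubdigraph (D.induce (D.verts.filter (γ · = i))))
    (hγ : ∀ v ∈ X, γ v = α v) (hv : v ∉ X) :
    H.outDeg v ≤ (H.del X).outDeg v + ((D.outNbrs v ∩ X).filter (α · = i)).card := by
  refine (outDeg_le_outDeg_del_add hv).trans (Nat.add_le_add_left (Finset.card_le_card ?_) _)
  intro w hw
  obtain ⟨hwH, hwX⟩ := Finset.mem_inter.1 hw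
  have hvw := mem_outNbrs.1 hwH
  refine Finset.mem_filter.2 ⟨Finset.mem_inter.2 ⟨mem_outNbrs.2 ?_, hwX⟩, ?_⟩
  · exact (isSubdigraph_induce_iff.1 hH).2 hvw
  · exact hγ w hwX ▸ (hH.of_colourClass (H.mem_snd _ hvw)).2

end ColourClass

end Digraph'

theorem reduced_dicolouring_combines_general
    (D : Digraph') (s : ℕ) (F : Fin s → ℕ → ℕ × ℕ)
    (X : Finset ℕ) (α β : ℕ → Fin s)
    (hα : (D.induce X).IsDicolouring s F α)
    (hβ : (D.del X).IsDicolouring s (D.reduceF F X α) β) :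
    D.IsDicolouring s F (fun v => if v ∈ X then α v else β v) := by
  intro i H hH hne
  have hγα : ∀ v ∈ X, (if v ∈ X then α v else β v) = α v := fun v hv => if_pos hv
  have hγβ : ∀ v ∉ X, (if v ∈ X then α v else β v) = β v := fun v hv => if_neg hv
  by_cases hHX : H.verts ⊆ X
  · exact hα i H (hH.colourClass_induce hγα hHX) hne
  -- A vertex of `H − X` that is sparse for the reduced budget is sparse in `H`: its degree grows
  -- by at most its number of `α`-coloured-`i` neighbours in `X`, which is what the budget lost.
  obtain ⟨v, hvH, hvX⟩ := Finset.not_subset.1 hHX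
  have hne' : (H.del X).verts.Nonempty :=
    ⟨v, Finset.mem_inter.2 ⟨hvH, Finset.mem_sdiff.2 ⟨hvH, hvX⟩⟩⟩
  obtain ⟨w, hw, hlt⟩ := hβ i (H.del X) (hH.colourClass_del hγβ) hne'
  obtain ⟨hwH, hwX⟩ := Finset.mem_sdiff.1 (Finset.mem_inter.1 hw).2
  have hin := hH.inDeg_le_of_colourClass hγα hwX
  have hout := hH.outDeg_le_of_colourClass hγα hwX
  simp only [reduceF] at hlt
  exact ⟨w, hwH, by omega⟩

/-- **Lemma (safe combination of colourings).** Let `(D,F)` be a pair, `X ⊆ V(D)`, `α` an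
`F`-dicolouring of `D[X]`, and `(D',F')` the pair reduced from `(D,F)` by `α`. Then for every
`F'`-dicolouring `β` of `D' = D − X`, the combined colouring (`α` on `X`, `β` elsewhere) is an
`F`-dicolouring of `D`. -/
theorem reduced_dicolouring_combines
    (D : Digraph') (s : ℕ) (F : Fin s → ℕ → ℕ × ℕ)
    (X : Finset ℕ) (hX : X ⊆ D.verts) (α β : ℕ → Fin s)
    (hα : (D.induce X).IsDicolouring s F α)
    (hβ : (D.del X).IsDicolouring s (D.reduceF F X α) β) :
    D.IsDicolouring s F (fun v => if v ∈ X then α v else β v) :=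
  reduced_dicolouring_combines_general D s F X α β hα hβ
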